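/- Let h > 0, F ∈ SO(3), J and J_d real 3×3 matrices with J_d symmetric, and suppose M := tr(F J_d) I₃ − F J_d is invertible. If ξ, δΩ ∈ ℝ³ satisfy the constrained variation relation h (J δΩ)^ = F ξ̂ J_d + J_d ξ̂ Fᵀ, then ξ = h Fᵀ M⁻¹ (J δΩ). -/
import Mathlib


open Matrix

/-- The hat map `^ : ℝ³ → 𝔰𝔬(3)`. -/
def hat (x : Fin 3 → ℝ) : Matrix (Fin 3) (Fin 3) ℝ :=
  !![0, -x 2, x 1; x 2, 0, -x 0; -x 1, x 0, 0]

lemma hat_inj {x y : Fin 3 → ℝ} (hxy : hat x = hat y) : x = y := by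
  funext i
  have h01 := congrFun (congrFun hxy 0) 1
  have h02 := congrFun (congrFun hxy 0) 2
  have h10 := congrFun (congrFun hxy 1) 0
  have h21 := congrFun (congrFun hxy 2) 1
  simp [hat] at h01 h02 h10 h21
  fin_cases i <;> simp_all

lemma hat_smul (c : ℝ) (x : Fin 3 → ℝ) : hat (c • x) = c • hat x := by
  ext i j
  fin_cases i <;> fin_cases j <;> simp [hat] <;> ring

/-- Key polynomial identity: `x̂ A + Aᵀ x̂ = ((tr A) I − A) x)^`. -/
lemma hat_key (A : Matrix (Fin 3) (Fin 3) ℝ) (x : Fin 3 → ℝ) :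
    hat x * A + Aᵀ * hat x = hat ((A.trace • (1 : Matrix (Fin 3) (Fin 3) ℝ) - A) *ᵥ x) := by
  ext i j
  fin_cases i <;> fin_cases j <;>
    simp [hat, mul_apply, mulVec, vecMul, dotProduct, Matrix.trace, Fin.sum_univ_three,
      Matrix.vecHead, Matrix.vecTail, Matrix.transpose_apply, Function.comp,
      Matrix.cons_vecMul, Matrix.vecMul_cons, Matrix.empty_vecMul, Pi.add_apply, Pi.smul_apply,
      smul_eq_mul, Matrix.one_apply, Matrix.smul_apply, Matrix.sub_apply] <;> ring

/-- Polynomial identity: `(Ax)^ A = (adj A)ᵀ x̂`. -/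
lemma hat_adj (A : Matrix (Fin 3) (Fin 3) ℝ) (x : Fin 3 → ℝ) :
    hat (A *ᵥ x) * A = (adjugate A)ᵀ * hat x := by
  ext i j
  fin_cases i <;> fin_cases j <;>
    simp [hat, mul_apply, mulVec, vecMul, dotProduct, Fin.sum_univ_three,
      Matrix.vecHead, Matrix.vecTail, Matrix.transpose_apply, Function.comp,
      Matrix.cons_vecMul, Matrix.vecMul_cons, Matrix.empty_vecMul, Pi.add_apply, Pi.smul_apply,
      smul_eq_mul,
      Matrix.adjugate_fin_three] <;> ring

lemma hat_conj (F : Matrix (Fin 3) (Fin 3) ℝ) (hF : Fᵀ * F = 1) (hFdet : F.det = 1)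
    (x : Fin 3 → ℝ) : hat (F *ᵥ x) = F * hat x * Fᵀ := by
  have hFF : F * Fᵀ = 1 := by
    rw [mul_eq_one_comm] at hF; exact hF
  have hadj : adjugate F = Fᵀ := by
    have h1 : F * adjugate F = 1 := by rw [Matrix.mul_adjugate, hFdet, one_smul]
    calc adjugate F = (Fᵀ * F) * adjugate F := by rw [hF, one_mul]
      _ = Fᵀ * (F * adjugate F) := by rw [Matrix.mul_assoc]
      _ = Fᵀ := by rw [h1, Matrix.mul_one]
  calc hat (F *ᵥ x) = hat (F *ᵥ x) * (F * Fᵀ) := by rw [hFF, Matrix.mul_one]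
    _ = (hat (F *ᵥ x) * F) * Fᵀ := by rw [Matrix.mul_assoc]
    _ = ((adjugate F)ᵀ * hat x) * Fᵀ := by rw [hat_adj]
    _ = F * hat x * Fᵀ := by rw [hadj, Matrix.transpose_transpose]

/-- Let `h > 0`, `F ∈ SO(3)`, `J_d` symmetric, and suppose
`M = tr(F J_d) I₃ − F J_d` is invertible.  If `h (J δΩ)^ = F ξ̂ J_d + J_d ξ̂ Fᵀ`,
then `ξ = h Fᵀ M⁻¹ (J δΩ)`. -/
theorem xi_from_constrained_variation (h : ℝ) (hh : 0 < h)
    (F : Matrix (Fin 3) (Fin 3) ℝ) (hF : Fᵀ * F = 1) (hFdet : F.det = 1)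
    (J Jd : Matrix (Fin 3) (Fin 3) ℝ) (hJd : Jdᵀ = Jd)
    (hM : IsUnit ((F * Jd).trace • (1 : Matrix (Fin 3) (Fin 3) ℝ) - F * Jd))
    (ξ δΩ : Fin 3 → ℝ)
    (hrel : h • hat (J *ᵥ δΩ) = F * hat ξ * Jd + Jd * hat ξ * Fᵀ) :
    ξ = h • (Fᵀ *ᵥ (((F * Jd).trace • (1 : Matrix (Fin 3) (Fin 3) ℝ) - F * Jd)⁻¹ *ᵥ (J *ᵥ δΩ))) := by
  set M : Matrix (Fin 3) (Fin 3) ℝ := (F * Jd).trace • (1 : Matrix (Fin 3) (Fin 3) ℝ) - F * Jd with hMdef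
  set y : Fin 3 → ℝ := F *ᵥ ξ with hy
  have hhaty : hat y = F * hat ξ * Fᵀ := hat_conj F hF hFdet ξ
  -- rewrite RHS of hrel as hat (M *ᵥ y)
  have hkey : F * hat ξ * Jd + Jd * hat ξ * Fᵀ = hat (M *ᵥ y) := by
    have := hat_key (F * Jd) y
    rw [← this, hhaty]
    have hAT : (F * Jd)ᵀ = Jd * Fᵀ := by rw [Matrix.transpose_mul, hJd]
    rw [hAT]
    have h1 : F * hat ξ * Fᵀ * (F * Jd) = F * hat ξ * Jd := by
      rw [Matrix.mul_assoc (F * hat ξ) Fᵀ (F * Jd), ← Matrix.mul_assoc Fᵀ F Jd, hF, Matrix.one_mul]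
    have h2 : Jd * Fᵀ * (F * hat ξ * Fᵀ) = Jd * hat ξ * Fᵀ := by
      rw [Matrix.mul_assoc Jd Fᵀ (F * hat ξ * Fᵀ), ← Matrix.mul_assoc Fᵀ (F * hat ξ) Fᵀ,
        ← Matrix.mul_assoc Fᵀ F (hat ξ), hF, Matrix.one_mul, ← Matrix.mul_assoc]
    rw [h1, h2]
  have heq : hat (h • (J *ᵥ δΩ)) = hat (M *ᵥ y) := by
    rw [hat_smul, hrel, hkey]
  have hvec : h • (J *ᵥ δΩ) = M *ᵥ y := hat_inj heq
  have hdet : IsUnit M.det := (Matrix.isUnit_iff_isUnit_det M).mp hM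
  have hMinv : M⁻¹ * M = 1 := Matrix.nonsing_inv_mul M hdet
  have hy2 : M⁻¹ *ᵥ (h • (J *ᵥ δΩ)) = y := by
    rw [hvec, Matrix.mulVec_mulVec, hMinv, Matrix.one_mulVec]
  calc ξ = (Fᵀ * F) *ᵥ ξ := by rw [hF, Matrix.one_mulVec]
    _ = Fᵀ *ᵥ y := by rw [hy, Matrix.mulVec_mulVec]
    _ = Fᵀ *ᵥ (M⁻¹ *ᵥ (h • (J *ᵥ δΩ))) := by rw [hy2]
    _ = h • (Fᵀ *ᵥ (M⁻¹ *ᵥ (J *ᵥ δΩ))) := by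
        rw [Matrix.mulVec_smul, Matrix.mulVec_smul]
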